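/- arXiv:1506.02096 — 6 statements merged into one kernel-verified Lean document; each statement's English description precedes it below -/
import Mathlib

section
/- Let T be a finite rooted tree. If T is a rooted path, then rpw(T) = 1. Otherwise, rpw(T) equals the minimum over all root-to-leaf paths P of T of the maximum over all subtrees T' of T − P of (1 + rpw(T')). -/
/-- A finite rooted tree: a root together with the list of subtrees
rooted at its children (the list order is the left-to-right order for
ordered trees; definitions that do not mention the order are
order-independent). -/
inductive RTree : Type where
  | node : List RTree → RTree

namespace RTree

/-- The subtrees rooted at the children of the root. -/
def children : RTree → List RTree
  | node cs => cs

/-- Number of nodes of the tree. -/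
def size : RTree → ℕ
  | node cs => 1 + (cs.attach.map fun c => size c.1).sum
decreasing_by have := List.sizeOf_lt_of_mem c.2; simp only [RTree.node.sizeOf_spec]; omega

/-- Maximum of a list of naturals (`0` for the empty list). -/
def listMaxD (l : List ℕ) : ℕ := l.foldr max 0

/-- Minimum of a nonempty list of naturals (`0` for the empty list). -/
def listMinD : List ℕ → ℕ
  | [] => 0
  | x :: xs => xs.foldr min x

/-- Given the list `rs` of rooted pathwidths of the children of the root,
the rooted pathwidth of the tree:
`1` if there are no children, and otherwise
`min over j of (max over i of rs[i] + χ(i ≠ j))`. -/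
def rpwAux (rs : List ℕ) : ℕ :=
  if rs = [] then 1 else
    listMinD ((List.range rs.length).map fun j =>
      listMaxD ((List.range rs.length).map fun i =>
        rs.getD i 0 + if i = j then 0 else 1))

/-- The rooted pathwidth `rpw` of a rooted tree. -/
def rpw : RTree → ℕ
  | node cs => rpwAux (cs.attach.map fun c => rpw c.1)
decreasing_by have := List.sizeOf_lt_of_mem c.2; simp only [RTree.node.sizeOf_spec]; omega

end RTree

namespace RTree

/-- `T` is a rooted path: every node has at most one child. -/
inductive IsRootedPath : RTree → Prop
  | leaf : IsRootedPath (RTree.node [])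
  | cons (c : RTree) : IsRootedPath c → IsRootedPath (RTree.node [c])

/-- `OffPath T off` holds iff there is a root-to-leaf path `P` in `T` such
that the rooted subtrees into which `T - P` decomposes (each connected
component of `T - P`, rooted at its node of minimum depth) are exactly the
trees in the list `off`. -/
inductive OffPath : RTree → List RTree → Prop
  | leaf : OffPath (RTree.node []) []
  | step (cs : List RTree) (j : Fin cs.length) (rest : List RTree) :
      OffPath (cs.get j) rest →
      OffPath (RTree.node cs) (cs.eraseIdx j.1 ++ rest)

/-! Unfolding `rpw` at each node along the child `c_h` that attains the minimum traces out a
root-to-leaf path `P`, and the children passed over on the way are exactly the subtrees of `T - P`,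
each charged `+ 1`. So for `b ≥ 1`, `rpw T ≤ b` holds iff some root-to-leaf path has
`1 + rpw T' ≤ b` for all subtrees `T'` of `T - P`. When `T` is not a rooted path, every `T - P` is
nonempty, which supplies `b ≥ 1` for every candidate value of the infimum. -/

theorem listMaxD_map_le_iff {α : Type*} {f : α → ℕ} {l : List α} {b : ℕ} :
    listMaxD (l.map f) ≤ b ↔ ∀ x ∈ l, f x ≤ b := by
  induction l with
  | nil => simp [listMaxD]
  | cons a l ih => simp [listMaxD, ← ih]

theorem listMinD_le_iff {l : List ℕ} (hl : l ≠ []) {b : ℕ} :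
    listMinD l ≤ b ↔ ∃ x ∈ l, x ≤ b := by
  obtain ⟨a, l, rfl⟩ := List.exists_cons_of_ne_nil hl
  induction l with
  | nil => simp [listMinD]
  | cons c l ih =>
    simp only [listMinD, List.foldr_cons, min_le_iff] at ih ⊢
    rw [ih (List.cons_ne_nil a l)]
    simp only [List.mem_cons, exists_eq_or_imp]
    tauto

theorem rpwAux_le_iff {rs : List ℕ} (hrs : rs ≠ []) {b : ℕ} :
    rpwAux rs ≤ b ↔ ∃ j < rs.length, ∀ i < rs.length,
      rs.getD i 0 + (if i = j then 0 else 1) ≤ b := by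
  rw [rpwAux, if_neg hrs, listMinD_le_iff (by simpa using hrs)]
  simp [listMaxD_map_le_iff]

theorem rpw_node (cs : List RTree) : rpw (node cs) = rpwAux (cs.map rpw) := by
  rw [rpw, List.attach_map_val]

theorem rpw_node_le_iff {cs : List RTree} (hcs : cs ≠ []) {b : ℕ} :
    rpw (node cs) ≤ b ↔
      ∃ j : Fin cs.length, rpw (cs.get j) ≤ b ∧ ∀ c ∈ cs.eraseIdx j, 1 + rpw c ≤ b := by
  rw [rpw_node, rpwAux_le_iff (by simpa using hcs)]
  simp only [List.length_map]
  constructor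
  · rintro ⟨j, hj, h⟩
    refine ⟨⟨j, hj⟩, by simpa [hj] using h j hj, fun c hc => ?_⟩
    obtain ⟨i, hi, hij, rfl⟩ := List.mem_eraseIdx_iff_getElem.1 hc
    simpa [hi, hij, add_comm] using h i hi
  · rintro ⟨j, hj, h⟩
    refine ⟨j, j.2, fun i hi => ?_⟩
    by_cases hij : i = j
    · subst hij; simpa [hi] using hj
    · simpa [hi, hij, add_comm] using h _ (List.mem_eraseIdx_iff_getElem.2 ⟨i, hi, hij, rfl⟩)

theorem rpw_leaf : rpw (node []) = 1 := by
  rw [rpw_node]; rfl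

theorem rpw_of_isRootedPath {T : RTree} (h : IsRootedPath T) : rpw T = 1 := by
  induction h with
  | leaf => exact rpw_leaf
  | cons c _ ih => rw [rpw_node, List.map_singleton, ih]; rfl

theorem isRootedPath_of_offPath_nil {T : RTree} (h : OffPath T []) : IsRootedPath T := by
  generalize hoff : ([] : List RTree) = off at h
  induction h with
  | leaf => exact .leaf
  | step cs j rest _ ih =>
    obtain ⟨herase, hrest⟩ := List.append_eq_nil_iff.1 hoff.symm
    obtain ⟨a, rfl⟩ : ∃ a, cs = [a] := by
      rcases List.eraseIdx_eq_nil_iff.1 herase with rfl | ⟨hlen, -⟩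
      · exact j.elim0
      · exact List.length_eq_one_iff.1 hlen
    obtain rfl : j = ⟨0, by simp⟩ := Fin.ext (by simp)
    exact .cons a (ih hrest.symm)

theorem rpw_le_of_offPath {T : RTree} {off : List RTree} (h : OffPath T off) {b : ℕ}
    (hb : 1 ≤ b) (hoff : ∀ t ∈ off, 1 + rpw t ≤ b) : rpw T ≤ b := by
  induction h with
  | leaf => exact rpw_leaf ▸ hb
  | step cs j rest _ ih =>
    have hcs : cs ≠ [] := by rintro rfl; exact j.elim0
    exact (rpw_node_le_iff hcs).2 ⟨j, ih fun t ht => hoff t (List.mem_append_right _ ht),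
      fun c hc => hoff c (List.mem_append_left _ hc)⟩

theorem rpw_le_listMaxD_of_offPath {T : RTree} {off : List RTree} (h : OffPath T off)
    (hoff : off ≠ []) : rpw T ≤ listMaxD (off.map fun t => 1 + rpw t) := by
  have hwidth := listMaxD_map_le_iff.1 (le_refl (listMaxD (off.map fun t => 1 + rpw t)))
  obtain ⟨t, ht⟩ := List.exists_mem_of_ne_nil off hoff
  exact rpw_le_of_offPath h ((Nat.le_add_right 1 _).trans (hwidth t ht)) hwidth

theorem exists_offPath_one_add_rpw_le : ∀ T : RTree,
    ∃ off, OffPath T off ∧ ∀ t ∈ off, 1 + rpw t ≤ rpw T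
  | node cs =>
    if hcs : cs = [] then hcs ▸ ⟨[], .leaf, by simp⟩
    else
      have ⟨j, hj, herase⟩ := (rpw_node_le_iff hcs).1 le_rfl
      have ⟨rest, hrest, hrest_le⟩ := exists_offPath_one_add_rpw_le (cs.get j)
      ⟨_, .step cs j rest hrest, by
        simp only [List.mem_append]
        rintro t (ht | ht)
        exacts [herase t ht, (hrest_le t ht).trans hj]⟩
decreasing_by have := List.sizeOf_lt_of_mem (List.get_mem cs j); simp only [node.sizeOf_spec]; omega

/-- If `T` is a rooted path then `rpw T = 1`; otherwise `rpw T` equals the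
minimum over all root-to-leaf paths `P` of the maximum over all subtrees
`T'` of `T - P` of `1 + rpw T'`. -/
theorem rpw_eq_min_over_root_to_leaf_paths (T : RTree) :
    (IsRootedPath T → rpw T = 1) ∧
    (¬ IsRootedPath T →
      rpw T = sInf {v : ℕ | ∃ off : List RTree, OffPath T off ∧
        v = listMaxD (off.map fun t' => 1 + rpw t')}) := by
  refine ⟨rpw_of_isRootedPath, fun hT => ?_⟩
  have rpw_le_width {off : List RTree} (hoff : OffPath T off) :
      rpw T ≤ listMaxD (off.map fun t' => 1 + rpw t') :=
    rpw_le_listMaxD_of_offPath hoff fun hnil => hT (isRootedPath_of_offPath_nil (hnil ▸ hoff))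
  obtain ⟨off, hoff, hle⟩ := exists_offPath_one_add_rpw_le T
  refine (IsLeast.csInf_eq ⟨?_, ?_⟩).symm
  · exact ⟨off, hoff, le_antisymm (rpw_le_width hoff) (listMaxD_map_le_iff.2 hle)⟩
  · rintro v ⟨off', hoff', rfl⟩
    exact rpw_le_width hoff'

end RTree
end

section
/- Let T be an ordered rooted tree with rank R(T) = W ≥ 2. Then every child c of the root satisfies R(T_c) ≤ W, and at most one child c of the root has R(T_c) = W. -/
namespace RTree

/-- A rank-`W`-witness for a tree whose root has `rs.length ≥ 1` children,
where `rs` is the list of ranks of the children subtrees (left to right,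
`0`-indexed).  It consists of a set `big` of big children (the others are
small), a coordinate `X` with `1 ≤ X ≤ W`, and the index `v` of the
vertical child, which must be big, subject to (R1ℓ), (R1r), (R2ℓ), (R2r)
and (R3). -/
def IsRankWitness (rs : List ℕ) (W : ℕ) (big : Finset (Fin rs.length)) (X : ℕ)
    (v : Fin rs.length) : Prop :=
  1 ≤ X ∧ X ≤ W ∧ v ∈ big ∧
  -- (R1ℓ): at most X-1 big children are strictly left of c_v
  ((big.filter fun i => i < v).card < X) ∧
  -- (R1r): at most W-X big children are strictly right of c_v
  ((big.filter fun i => v < i).card + X ≤ W) ∧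
  -- (R2ℓ): every small child left of c_v has rank ≤ X-1-ℓ_i
  (∀ i : Fin rs.length, i ∉ big → i < v →
      rs.get i + (big.filter fun j => j < i).card + 1 ≤ X) ∧
  -- (R2r): every small child right of c_v has rank ≤ W-X-r_i
  (∀ i : Fin rs.length, i ∉ big → v < i →
      rs.get i + (big.filter fun j => i < j).card + X ≤ W) ∧
  -- (R3): injective rank-bounds π : big → {1,…,W} dominating the ranks
  (∃ π : Fin rs.length → ℕ,
      (∀ i ∈ big, rs.get i ≤ π i ∧ 1 ≤ π i ∧ π i ≤ W) ∧
      Set.InjOn π big)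

/-- `T` (with child rank list `rs`) has some rank-`W`-witness. -/
def hasRankWitness (rs : List ℕ) (W : ℕ) : Prop :=
  ∃ (big : Finset (Fin rs.length)) (X : ℕ) (v : Fin rs.length),
    IsRankWitness rs W big X v

/-- Rank of a tree, given the list of ranks of the children of the root:
`1` for a single node, else the smallest `W ≥ 1` admitting a rank-`W`-witness. -/
noncomputable def rankAux (rs : List ℕ) : ℕ :=
  if rs = [] then 1 else sInf {W | 1 ≤ W ∧ hasRankWitness rs W}

/-- The rank `R(T)` of an ordered rooted tree. -/
noncomputable def rank : RTree → ℕ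
  | node cs => rankAux (cs.attach.map fun c => rank c.1)
decreasing_by have := List.sizeOf_lt_of_mem c.2; simp only [RTree.node.sizeOf_spec]; omega

/-- A left-corner-`W`-witness, given the list `rs` of ranks of the children of
the root: a number `W'` with `1 ≤ W' ≤ W+1` and indices
`σ(W') < … < σ(W)` (1-based positions in `{1,…,d}`, so the rank of child
`σ w` is `rs.getD (σ w - 1) 0`) satisfying (C1) and (C2), where by
convention `σ(W'-1) = 0` and `σ(W+1) = d+1`. -/
def IsLeftCornerWitness (rs : List ℕ) (W W' : ℕ) (σ : ℕ → ℕ) : Prop :=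
  1 ≤ W' ∧ W' ≤ W + 1 ∧
  (∀ w, W' ≤ w → w ≤ W → 1 ≤ σ w ∧ σ w ≤ rs.length) ∧
  (∀ w, W' ≤ w → w + 1 ≤ W → σ w < σ (w + 1)) ∧
  -- (C1)
  (∀ w, W' ≤ w → w ≤ W → rs.getD (σ w - 1) 0 = w) ∧
  -- (C2): for `W'-1 ≤ w ≤ W`, children strictly between σ(w) and σ(w+1)
  -- have rank ≤ w-1
  (∀ w, W' ≤ w + 1 → w ≤ W → ∀ i,
      (if W' ≤ w then σ w else 0) < i →
      i < (if w + 1 ≤ W then σ (w + 1) else rs.length + 1) →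
      rs.getD (i - 1) 0 + 1 ≤ w)

/-- A right-corner-`W`-witness: the mirror notion, with
`σ(W) < … < σ(W')` and the conventions `σ(W'-1) = d+1`, `σ(W+1) = 0`. -/
def IsRightCornerWitness (rs : List ℕ) (W W' : ℕ) (σ : ℕ → ℕ) : Prop :=
  1 ≤ W' ∧ W' ≤ W + 1 ∧
  (∀ w, W' ≤ w → w ≤ W → 1 ≤ σ w ∧ σ w ≤ rs.length) ∧
  (∀ w, W' ≤ w → w + 1 ≤ W → σ (w + 1) < σ w) ∧
  -- (C1)
  (∀ w, W' ≤ w → w ≤ W → rs.getD (σ w - 1) 0 = w) ∧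
  -- (C2)
  (∀ w, W' ≤ w + 1 → w ≤ W → ∀ i,
      (if w + 1 ≤ W then σ (w + 1) else 0) < i →
      i < (if W' ≤ w then σ w else rs.length + 1) →
      rs.getD (i - 1) 0 + 1 ≤ w)

end RTree


namespace RTree

section Witness

variable {rs : List ℕ} {W X : ℕ} {big : Finset (Fin rs.length)} {v : Fin rs.length}

theorem IsRankWitness.get_lt_of_notMem (h : IsRankWitness rs W big X v) {i : Fin rs.length}
    (hi : i ∉ big) : rs.get i < W := by
  obtain ⟨hX1, hXW, hv, -, -, hR2l, hR2r, -⟩ := h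
  rcases lt_trichotomy i v with hlt | rfl | hgt
  · have := hR2l i hi hlt; omega
  · exact absurd hv hi
  · have := hR2r i hi hgt; omega

theorem IsRankWitness.get_le (h : IsRankWitness rs W big X v) (i : Fin rs.length) :
    rs.get i ≤ W := by
  by_cases hi : i ∈ big
  · obtain ⟨π, hπ, -⟩ := h.2.2.2.2.2.2.2
    exact (hπ i hi).1.trans (hπ i hi).2.2
  · exact (h.get_lt_of_notMem hi).le

/-- A child of rank `W` must be big and assigned `π = W`, so injectivity of `π` allows only
one. -/
theorem IsRankWitness.eq_of_get_eq (h : IsRankWitness rs W big X v) {i j : Fin rs.length}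
    (hi : rs.get i = W) (hj : rs.get j = W) : i = j := by
  obtain ⟨π, hπ, hinj⟩ := h.2.2.2.2.2.2.2
  have big_of_eq : ∀ k, rs.get k = W → k ∈ big ∧ π k = W := fun k hk => by
    by_cases hb : k ∈ big
    · have := hπ k hb; exact ⟨hb, by omega⟩
    · exact absurd hk (h.get_lt_of_notMem hb).ne
  obtain ⟨hbi, hπi⟩ := big_of_eq i hi
  obtain ⟨hbj, hπj⟩ := big_of_eq j hj
  exact hinj hbi hbj (hπi.trans hπj.symm)

end Witness

/-- `rankAux rs = 0` is the junk value of `sInf ∅`; any other value is attained by a witness. -/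
theorem hasRankWitness_rankAux {rs : List ℕ} (hrs : rs ≠ []) (h0 : rankAux rs ≠ 0) :
    hasRankWitness rs (rankAux rs) := by
  rw [rankAux, if_neg hrs] at h0 ⊢
  have hne : {W | 1 ≤ W ∧ hasRankWitness rs W}.Nonempty :=
    Set.nonempty_iff_ne_empty.mpr fun h => h0 (by rw [h, Nat.sInf_empty])
  exact (Nat.sInf_mem hne).2

theorem rank_node (cs : List RTree) : rank (node cs) = rankAux (cs.map rank) := by
  rw [rank, List.map_attach_eq_pmap, List.pmap_eq_map]

/-- If an ordered rooted tree has rank `W ≥ 2`, then every child of the root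
has rank at most `W`, and at most one child of the root has rank exactly
`W`. -/
theorem rank_children_le_and_at_most_one_eq (T : RTree) (W : ℕ)
    (hW : 2 ≤ W) (hT : rank T = W) :
    (∀ c ∈ T.children, rank c ≤ W) ∧
    (∀ i j : Fin T.children.length,
      rank (T.children.get i) = W → rank (T.children.get j) = W → i = j) := by
  obtain ⟨cs⟩ := T
  rcases eq_or_ne cs [] with rfl | hcs
  · simp [children]
  rw [rank_node] at hT
  obtain ⟨big, X, v, hwit⟩ :=
    hT ▸ hasRankWitness_rankAux (List.map_eq_nil_iff.not.mpr hcs) (by omega)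
  have hget (i : Fin cs.length) : (cs.map rank).get (i.cast (List.length_map _).symm) =
      rank (cs.get i) := by simp
  refine ⟨fun c hc => ?_, fun i j hi hj => ?_⟩
  · obtain ⟨i, rfl⟩ := List.get_of_mem hc
    exact hget i ▸ hwit.get_le _
  · exact Fin.cast_injective _ (hwit.eq_of_get_eq ((hget i).trans hi) ((hget j).trans hj))

end RTree
end

section
/- Let T be an ordered rooted tree whose root has d ≥ 1 children and let W ≥ 2 be an integer. Then T has a rank-W-witness with vertical-child index v = 1 if and only if T has a left-corner-W-witness; symmetrically, T has a rank-W-witness with vertical-child index v = d if and only if T has a right-corner-W-witness. -/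
/-!
With the vertical child first, `X` only enters (R1r) and (R2r), so it may be taken to be `1`.
The corners are then found greedily from the right: `σ W` is the rightmost child of rank at
least `W`, `σ (W - 1)` the rightmost child left of it of rank at least `W - 1`, and so on. In a
rank-witness every greedy pick is big with `π`-value and rank exactly `w`, which gives (C1), and
the maximality of the picks gives (C2). Conversely, a left-corner-witness yields a rank-witness
whose big children are the first child and the corners, with `X = 1` and `π` the rank on the
corners: a small child in the gap between `σ w` and `σ (w + 1)` has rank below `w`, and only the
at most `W - w` corners of rank above `w` lie to its right. The statement for the last child and
right-corner-witnesses is the mirror image under reversal of the list of children.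
-/

namespace RTree

open Finset

namespace IsLeftCornerWitness

variable {rs : List ℕ} {W W' : ℕ} {σ : ℕ → ℕ}

theorem strictMonoOn (hc : IsLeftCornerWitness rs W W' σ) : StrictMonoOn σ (Set.Icc W' W) :=
  strictMonoOn_of_lt_succ Set.ordConnected_Icc fun w _ hw hw1 => by
    rw [Order.succ_eq_add_one] at hw1 ⊢
    exact hc.2.2.2.1 w hw.1 hw1.2

theorem get_mem_Icc_of_mem_image (hc : IsLeftCornerWitness rs W W' σ) {j : Fin rs.length}
    (hj : (j : ℕ) + 1 ∈ (Icc W' W).image σ) :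
    rs.get j ∈ Set.Icc W' W ∧ σ (rs.get j) = j + 1 := by
  obtain ⟨w, hw, hσw⟩ := mem_image.1 hj
  have hC1 := hc.2.2.2.2.1 w (mem_Icc.1 hw).1 (mem_Icc.1 hw).2
  rw [hσw, Nat.add_sub_cancel, List.getD_eq_getElem _ _ j.isLt] at hC1
  rw [List.get_eq_getElem, hC1]
  exact ⟨mem_Icc.1 hw, hσw⟩

theorem injOn_get (hc : IsLeftCornerWitness rs W W' σ) :
    Set.InjOn rs.get {j | (j : ℕ) + 1 ∈ (Icc W' W).image σ} :=
  fun j hj j' hj' hjj' => Fin.ext <| by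
    have h := (hc.get_mem_Icc_of_mem_image hj).2
    rw [hjj', (hc.get_mem_Icc_of_mem_image hj').2] at h
    omega

theorem card_le_sub_of_lt_get (hc : IsLeftCornerWitness rs W W' σ) {w : ℕ}
    {S : Finset (Fin rs.length)}
    (hS : ∀ j ∈ S, (j : ℕ) + 1 ∈ (Icc W' W).image σ ∧ w < rs.get j) : #S ≤ W - w :=
  calc #S ≤ #(Ioc w W) := card_le_card_of_injOn rs.get
        (fun j hj => mem_Ioc.2 ⟨(hS j hj).2, (hc.get_mem_Icc_of_mem_image (hS j hj).1).1.2⟩)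
        fun j hj j' hj' => hc.injOn_get (hS j hj).1 (hS j' hj').1
    _ = W - w := Nat.card_Ioc w W

theorem exists_getD_lt_of_notMem_image (hc : IsLeftCornerWitness rs W W' σ) {p : ℕ}
    (hp : 0 < p) (hpd : p ≤ rs.length) (hnc : p ∉ (Icc W' W).image σ) :
    ∃ w ≤ W, rs.getD (p - 1) 0 < w ∧ (W' ≤ w → σ w < p) := by
  -- `w` is the level of the gap between the corners `σ w` and `σ (w + 1)` that contains `p`
  obtain ⟨hW'1, hW'W⟩ : 1 ≤ W' ∧ W' ≤ W + 1 := ⟨hc.1, hc.2.1⟩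
  set w := Nat.findGreatest (fun u => u + 1 ≤ W' ∨ σ u < p) W
  have hW'w : W' ≤ w + 1 := by
    have := Nat.le_findGreatest (P := fun u => u + 1 ≤ W' ∨ σ u < p) (m := W' - 1) (n := W)
      (by omega) (Or.inl (by omega))
    omega
  have hwW : w ≤ W := Nat.findGreatest_le W
  have hlo : W' ≤ w → σ w < p := fun h =>
    (Nat.findGreatest_spec (P := fun u => u + 1 ≤ W' ∨ σ u < p) (m := W' - 1) (n := W)
      (by omega) (Or.inl (by omega))).resolve_left (by omega)
  have hhi : w + 1 ≤ W → p < σ (w + 1) := fun h => by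
    have hn := Nat.findGreatest_is_greatest (Nat.lt_add_one w) h
    push Not at hn
    have : σ (w + 1) ≠ p := fun he =>
      hnc (mem_image.2 ⟨w + 1, mem_Icc.2 ⟨by omega, h⟩, he⟩)
    omega
  have hC2 := hc.2.2.2.2.2 w hW'w hwW p (by split_ifs with h; exacts [hlo h, hp])
    (by split_ifs with h; exacts [hhi h, by omega])
  exact ⟨w, hwW, by omega, hlo⟩

theorem exists_separating_level (hc : IsLeftCornerWitness rs W W' σ) (i : Fin rs.length) :
    ∃ w, 1 ≤ w ∧ w ≤ W ∧ rs.get i ≤ w ∧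
      ((i : ℕ) + 1 ∉ (Icc W' W).image σ → rs.get i < w) ∧
      ∀ j : Fin rs.length, (j : ℕ) + 1 ∈ (Icc W' W).image σ → i < j → w < rs.get j := by
  by_cases hi : (i : ℕ) + 1 ∈ (Icc W' W).image σ
  · obtain ⟨hmem, hσi⟩ := hc.get_mem_Icc_of_mem_image hi
    refine ⟨rs.get i, hc.1.trans hmem.1, hmem.2, le_rfl, fun h => absurd hi h,
      fun j hj hij => ?_⟩
    obtain ⟨hmemj, hσj⟩ := hc.get_mem_Icc_of_mem_image hj
    rw [← hc.strictMonoOn.lt_iff_lt hmem hmemj, hσi, hσj]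
    exact Nat.add_lt_add_right hij 1
  · obtain ⟨w, hwW, hlt, hlo⟩ :=
      hc.exists_getD_lt_of_notMem_image (Nat.add_one_pos _) i.isLt hi
    rw [Nat.add_sub_cancel, List.getD_eq_getElem _ _ i.isLt] at hlt
    refine ⟨w, by omega, hwW, hlt.le, fun _ => hlt, fun j hj hij => ?_⟩
    obtain ⟨hmemj, hσj⟩ := hc.get_mem_Icc_of_mem_image hj
    by_contra! hjw
    have := (hc.strictMonoOn.le_iff_le hmemj ⟨hmemj.1.trans hjw, hwW⟩).2 hjw
    have := hlo (hmemj.1.trans hjw)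
    rw [Fin.lt_def] at hij
    omega

end IsLeftCornerWitness

theorem exists_isRankWitness_of_isLeftCornerWitness {rs : List ℕ} {W W' : ℕ} {σ : ℕ → ℕ}
    (hd : 0 < rs.length) (hc : IsLeftCornerWitness rs W W' σ) :
    ∃ big X v, IsRankWitness rs W big X v ∧ (v : ℕ) = 0 := by
  classical
  let v : Fin rs.length := ⟨0, hd⟩
  let IsCorner : Fin rs.length → Prop := fun j => (j : ℕ) + 1 ∈ (Icc W' W).image σ
  let big := univ.filter fun j => j = v ∨ IsCorner j
  have hv_lt : ∀ j, j ≠ v → v < j := fun j hj =>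
    Fin.lt_def.2 (Nat.pos_of_ne_zero fun h => hj (Fin.ext h))
  have hcorner : ∀ j ∈ big, v < j → IsCorner j := fun j hj hvj =>
    (mem_filter.1 hj).2.resolve_left hvj.ne'
  have hcard : ∀ i w, v ≤ i → (∀ j, IsCorner j → i < j → w < rs.get j) →
      #(big.filter (i < ·)) ≤ W - w := fun i w hvi hw =>
    hc.card_le_sub_of_lt_get fun j hj =>
      have hij := (mem_filter.1 hj).2
      have := hcorner j (mem_filter.1 hj).1 (hvi.trans_lt hij)
      ⟨this, hw j this hij⟩
  obtain ⟨w₀, hw₀, hw₀W, hv₀, -, hright₀⟩ := hc.exists_separating_level v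
  refine ⟨big, 1, v, ⟨le_rfl, by omega, by simp [big], ?_, ?_, ?_, ?_, ?_⟩, rfl⟩
  · simp [Fin.lt_def, v]
  · have := hcard v w₀ le_rfl hright₀
    omega
  · intro i _ hi
    simp [Fin.lt_def, v] at hi
  · intro i hi hvi
    obtain ⟨w, hw, hwW, -, hlt, hright⟩ := hc.exists_separating_level i
    have := hcard i w hvi.le hright
    have := hlt fun h => hi (mem_filter.2 ⟨mem_univ _, Or.inr h⟩)
    omega
  -- `v` gets `π`-value `w₀`, below the ranks of all corners to its right
  · refine ⟨fun i => if i = v then w₀ else rs.get i, fun i hi => ?_, fun a ha b hb hab => ?_⟩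
    · by_cases hiv : i = v
      · simp only [hiv, if_true]
        exact ⟨hv₀, hw₀, hw₀W⟩
      · have := (hc.get_mem_Icc_of_mem_image (hcorner i hi (hv_lt i hiv))).1
        simp only [hiv, if_false]
        exact ⟨le_rfl, hc.1.trans this.1, this.2⟩
    · by_cases hav : a = v <;> by_cases hbv : b = v <;>
        simp only [hav, hbv, if_true, if_false] at hab
      · exact hav.trans hbv.symm
      · exact absurd hab (hright₀ b (hcorner b hb (hv_lt b hbv)) (hv_lt b hbv)).ne
      · exact absurd hab (hright₀ a (hcorner a ha (hv_lt a hav)) (hv_lt a hav)).ne'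
      · exact hc.injOn_get (hcorner a ha (hv_lt a hav)) (hcorner b hb (hv_lt b hbv)) hab

section Greedy

variable {rs : List ℕ} {W : ℕ}

/-- Positions are `1`-based, and `0` means that the search found no further corner. -/
def greedyCorner (rs : List ℕ) (W : ℕ) : ℕ → ℕ
  | 0 => rs.length + 1
  | k + 1 => Nat.findGreatest (fun p => 0 < p ∧ W - k ≤ rs.getD (p - 1) 0)
      (greedyCorner rs W k - 1)

theorem greedyCorner_succ_le (k : ℕ) :
    greedyCorner rs W (k + 1) ≤ greedyCorner rs W k - 1 :=
  Nat.findGreatest_le _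

theorem greedyCorner_antitone : Antitone (greedyCorner rs W) :=
  antitone_nat_of_succ_le fun k => (greedyCorner_succ_le k).trans (Nat.sub_le _ _)

theorem greedyCorner_lt {a b : ℕ} (hab : a < b) (hb : greedyCorner rs W b ≠ 0) :
    greedyCorner rs W b < greedyCorner rs W a := by
  have := greedyCorner_antitone (rs := rs) (W := W) (show a + 1 ≤ b from hab)
  have := greedyCorner_succ_le (rs := rs) (W := W) a
  omega

theorem greedyCorner_le_length {k : ℕ} (hk : k ≠ 0) : greedyCorner rs W k ≤ rs.length :=
  (greedyCorner_antitone (Nat.one_le_iff_ne_zero.2 hk)).trans (greedyCorner_succ_le 0)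

theorem le_getD_greedyCorner {k : ℕ} (hk : greedyCorner rs W (k + 1) ≠ 0) :
    W - k ≤ rs.getD (greedyCorner rs W (k + 1) - 1) 0 :=
  (Nat.findGreatest_of_ne_zero rfl hk).2

theorem getD_lt_of_greedyCorner {k p : ℕ} (hp : 0 < p) (hlo : greedyCorner rs W (k + 1) < p)
    (hhi : p < greedyCorner rs W k) : rs.getD (p - 1) 0 < W - k := by
  by_contra! h
  exact hlo.not_ge (Nat.le_findGreatest (by omega) ⟨hp, h⟩)

/-- The `k` corners found before the `k`-th one are big, lie to its right and use the
`π`-values `W, …, W - k + 1`; so (R2r) forces it to be big and injectivity of `π` caps its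
`π`-value, and hence its rank, at `W - k`. -/
theorem exists_mem_big_at_greedyCorner {big : Finset (Fin rs.length)} {π : Fin rs.length → ℕ}
    (hsmall : ∀ i ∉ big, rs.get i + #(big.filter (i < ·)) + 1 ≤ W)
    (hπ : ∀ i ∈ big, rs.get i ≤ π i ∧ π i ≤ W) (hinj : Set.InjOn π big) :
    ∀ m ≤ W, greedyCorner rs W m ≠ 0 → ∀ k < m, ∃ j : Fin rs.length,
      (j : ℕ) + 1 = greedyCorner rs W (k + 1) ∧ j ∈ big ∧ π j = W - k ∧
        rs.get j = W - k := by
  intro m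
  induction m with
  | zero => simp
  | succ m ih =>
    intro hmW hg k hk
    have earlier := ih (by omega) fun h => hg (Nat.eq_zero_of_le_zero
      (h ▸ greedyCorner_antitone (Nat.le_succ m)))
    obtain hk | rfl : k < m ∨ k = m := by omega
    · exact earlier k hk
    have hgk : greedyCorner rs W (k + 1) ≠ 0 := hg
    have hlen := greedyCorner_le_length (rs := rs) (W := W) (show k + 1 ≠ 0 by omega)
    let j : Fin rs.length := ⟨greedyCorner rs W (k + 1) - 1, by omega⟩
    have hrank : W - k ≤ rs.get j := by
      have := le_getD_greedyCorner hgk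
      rwa [List.getD_eq_getElem _ _ j.isLt] at this
    have hright : Set.SurjOn π (big.filter (j < ·)) (Ioc (W - k) W) := by
      intro w hw
      rw [coe_Ioc, Set.mem_Ioc] at hw
      obtain ⟨j', hj', hj'big, hπj', -⟩ := earlier (W - w) (by omega)
      have := greedyCorner_lt (rs := rs) (W := W) (show W - w + 1 < k + 1 by omega) hgk
      exact ⟨j', mem_coe.2 (mem_filter.2
        ⟨hj'big, show greedyCorner rs W (k + 1) - 1 < (j' : ℕ) by omega⟩), by omega⟩
    have hcount : k ≤ #(big.filter (j < ·)) := by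
      have := card_le_card_of_surjOn π hright
      rw [Nat.card_Ioc] at this
      omega
    have hbig : j ∈ big := by
      by_contra h
      have := hsmall j h
      omega
    have hπj : π j ≤ W - k := by
      by_contra! h
      obtain ⟨j', hj', hπj'⟩ := hright (mem_coe.2 (mem_Ioc.2 ⟨h, (hπ j hbig).2⟩))
      rw [mem_coe, mem_filter] at hj'
      exact hj'.2.ne (hinj hbig hj'.1 hπj'.symm)
    have := (hπ j hbig).1
    exact ⟨j, by simp only [j]; omega, hbig, by omega, by omega⟩

/-- `K` is the number of corners found by the greedy search. -/
theorem isLeftCornerWitness_greedyCorner {K : ℕ} (hKW : K ≤ W)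
    (hgK : greedyCorner rs W K ≠ 0) (hstop : K < W → greedyCorner rs W (K + 1) = 0)
    (hfull : K = W → greedyCorner rs W W ≤ 1)
    (hrank : ∀ k < K, rs.getD (greedyCorner rs W (k + 1) - 1) 0 = W - k) :
    IsLeftCornerWitness rs W (W + 1 - K) (fun w => greedyCorner rs W (W + 1 - w)) := by
  have hgpos : ∀ k ≤ K, greedyCorner rs W k ≠ 0 := fun k hk h0 =>
    hgK (Nat.eq_zero_of_le_zero (h0 ▸ greedyCorner_antitone hk))
  refine ⟨by omega, by omega, fun w hw hwW => ?_, fun w hw hwW => ?_, fun w hw hwW => ?_,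
    fun w hw hwW p hlo hhi => ?_⟩
  · exact ⟨Nat.pos_of_ne_zero (hgpos _ (by omega)), greedyCorner_le_length (by omega)⟩
  · exact greedyCorner_lt (by omega) (hgpos _ (by omega))
  · beta_reduce
    rw [show W + 1 - w = W - w + 1 by omega, hrank (W - w) (by omega)]
    omega
  · beta_reduce at hlo hhi
    have hhi' : p < greedyCorner rs W (W - w) := by
      split_ifs at hhi
      · rwa [show W + 1 - (w + 1) = W - w by omega] at hhi
      · rwa [show W - w = 0 by omega]
    have hlo' : 0 < p ∧ greedyCorner rs W (W - w + 1) < p := by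
      split_ifs at hlo
      · rw [show W + 1 - w = W - w + 1 by omega] at hlo
        omega
      · obtain hK | hK := hKW.lt_or_eq
        · rw [show W - w = K by omega, hstop hK]
          omega
        · rw [show W - w = W by omega] at hhi'
          have := hfull hK
          omega
    have := getD_lt_of_greedyCorner hlo'.1 hlo'.2 hhi'
    omega

end Greedy

theorem exists_isLeftCornerWitness_of_isRankWitness {rs : List ℕ} {W : ℕ}
    {big : Finset (Fin rs.length)} {X : ℕ} {v : Fin rs.length}
    (h : IsRankWitness rs W big X v) (hv : (v : ℕ) = 0) :
    ∃ W' σ, IsLeftCornerWitness rs W W' σ := by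
  obtain ⟨hX, -, hvbig, -, -, -, hR2r, π, hπ, hinj⟩ := h
  have hsmall : ∀ i ∉ big, rs.get i + #(big.filter (i < ·)) + 1 ≤ W := fun i hi =>
    have hvi : v < i := Fin.lt_def.2 <| hv ▸ Nat.pos_of_ne_zero fun h0 =>
      hi (Fin.ext (h0.trans hv.symm) ▸ hvbig)
    have := hR2r i hi hvi
    by omega
  set K := Nat.findGreatest (fun k => greedyCorner rs W k ≠ 0) W
  have hKW : K ≤ W := Nat.findGreatest_le W
  have hgK : greedyCorner rs W K ≠ 0 := Nat.findGreatest_spec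
    (P := fun k => greedyCorner rs W k ≠ 0) (Nat.zero_le W) (Nat.succ_ne_zero _)
  have spec := exists_mem_big_at_greedyCorner hsmall
    (fun i hi => ⟨(hπ i hi).1, (hπ i hi).2.2⟩) hinj K hKW hgK
  -- if all `W` searches succeed, the `π`-value of `v` is taken by a corner, which must be `v`
  have hfull : K = W → greedyCorner rs W W ≤ 1 := by
    intro hKW'
    obtain ⟨-, hπv1, hπvW⟩ := hπ v hvbig
    obtain ⟨j, hj, hjbig, hπj, -⟩ := spec (W - π v) (by omega)
    have hjv : j = v := hinj hjbig hvbig (by omega)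
    have := greedyCorner_antitone (rs := rs) (W := W) (show W - π v + 1 ≤ W by omega)
    rw [hjv] at hj
    omega
  refine ⟨_, _, isLeftCornerWitness_greedyCorner hKW hgK (fun hK =>
    not_not.1 (Nat.findGreatest_is_greatest (Nat.lt_add_one K) hK)) hfull fun k hk => ?_⟩
  obtain ⟨j, hj, -, -, hrank⟩ := spec k hk
  rw [← hj, Nat.add_sub_cancel, List.getD_eq_getElem _ _ j.isLt]
  exact hrank

theorem exists_isRankWitness_first_iff_isLeftCornerWitness {rs : List ℕ} (hne : rs ≠ [])
    (W : ℕ) :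
    (∃ big X v, IsRankWitness rs W big X v ∧ (v : ℕ) = 0) ↔
      ∃ W' σ, IsLeftCornerWitness rs W W' σ :=
  ⟨fun ⟨_, _, _, h, hv⟩ => exists_isLeftCornerWitness_of_isRankWitness h hv,
    fun ⟨_, _, hc⟩ =>
      exists_isRankWitness_of_isLeftCornerWitness (List.length_pos_iff.2 hne) hc⟩


section Reverse

variable {rs : List ℕ} {W : ℕ}

def revIndex (rs : List ℕ) : Fin rs.length ≃ Fin rs.reverse.length :=
  Fin.revPerm.trans (finCongr List.length_reverse.symm)

theorem revIndex_lt_revIndex {i j : Fin rs.length} : revIndex rs i < revIndex rs j ↔ j < i :=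
  Fin.rev_lt_rev

theorem get_reverse_revIndex (i : Fin rs.length) : rs.reverse.get (revIndex rs i) = rs.get i := by
  simp only [List.get_eq_getElem, List.getElem_reverse, revIndex, Equiv.trans_apply,
    Fin.revPerm_apply, finCongr_apply, Fin.val_cast, Fin.val_rev]
  congr 1
  omega

theorem val_revIndex (i : Fin rs.length) : (revIndex rs i : ℕ) = rs.length - (i + 1) :=
  Fin.val_rev i

theorem IsRankWitness.reverse {big : Finset (Fin rs.length)} {X : ℕ} {v : Fin rs.length}
    (h : IsRankWitness rs W big X v) :
    IsRankWitness rs.reverse W (big.map (revIndex rs).toEmbedding) (W + 1 - X)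
      (revIndex rs v) := by
  obtain ⟨hX1, hXW, hvbig, hR1l, hR1r, hR2l, hR2r, π, hπ, hinj⟩ := h
  have hmem : ∀ i, revIndex rs i ∈ big.map (revIndex rs).toEmbedding ↔ i ∈ big := by simp
  have hcard_lt : ∀ i, #((big.map (revIndex rs).toEmbedding).filter (· < revIndex rs i)) =
      #(big.filter (i < ·)) := fun i => by
    simp [filter_map, revIndex_lt_revIndex]
  have hcard_gt : ∀ i, #((big.map (revIndex rs).toEmbedding).filter (revIndex rs i < ·)) =
      #(big.filter (· < i)) := fun i => by
    simp [filter_map, revIndex_lt_revIndex]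
  refine ⟨by omega, by omega, (hmem v).2 hvbig, by rw [hcard_lt]; omega, by rw [hcard_gt]; omega,
    ?_, ?_, π ∘ (revIndex rs).symm, ?_, ?_⟩
  · intro i' hi' hlt
    obtain ⟨i, rfl⟩ := (revIndex rs).surjective i'
    have := hR2r i (mt (hmem i).2 hi') (revIndex_lt_revIndex.1 hlt)
    rw [get_reverse_revIndex, hcard_lt]
    omega
  · intro i' hi' hlt
    obtain ⟨i, rfl⟩ := (revIndex rs).surjective i'
    have := hR2l i (mt (hmem i).2 hi') (revIndex_lt_revIndex.1 hlt)
    rw [get_reverse_revIndex, hcard_gt]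
    omega
  · intro i' hi'
    obtain ⟨i, rfl⟩ := (revIndex rs).surjective i'
    simp only [Function.comp_apply, Equiv.symm_apply_apply, get_reverse_revIndex]
    exact hπ i ((hmem i).1 hi')
  · intro a' ha' b' hb' hab
    obtain ⟨a, rfl⟩ := (revIndex rs).surjective a'
    obtain ⟨b, rfl⟩ := (revIndex rs).surjective b'
    simp only [Function.comp_apply, Equiv.symm_apply_apply] at hab
    rw [hinj ((hmem a).1 (mem_coe.1 ha')) ((hmem b).1 (mem_coe.1 hb')) hab]

theorem exists_isRankWitness_reverse_iff :
    (∃ big X v, IsRankWitness rs.reverse W big X v ∧ (v : ℕ) = 0) ↔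
      ∃ big X v, IsRankWitness rs W big X v ∧ (v : ℕ) + 1 = rs.length := by
  constructor
  · rintro ⟨big, X, v, h, hv⟩
    rw [← List.reverse_reverse rs]
    refine ⟨_, _, _, h.reverse, ?_⟩
    have := v.pos
    simp only [val_revIndex, hv, List.length_reverse] at this ⊢
    omega
  · rintro ⟨big, X, v, h, hv⟩
    refine ⟨_, _, _, h.reverse, ?_⟩
    rw [val_revIndex]
    omega

theorem getD_reverse_sub_one {p : ℕ} (hp : 0 < p) (hpd : p ≤ rs.length) :
    rs.reverse.getD (p - 1) 0 = rs.getD (rs.length - p) 0 := by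
  rw [List.getD_reverse _ (by omega)]
  congr 1
  omega

variable {W' : ℕ} {σ : ℕ → ℕ}

theorem IsRightCornerWitness.reverse (h : IsRightCornerWitness rs W W' σ) :
    IsLeftCornerWitness rs.reverse W W' (fun w => rs.length + 1 - σ w) := by
  obtain ⟨h1, h2, h3, h4, h5, h6⟩ := h
  refine ⟨h1, h2, fun w hw hwW => ?_, fun w hw hwW => ?_, fun w hw hwW => ?_,
    fun w hw hwW p hlo hhi => ?_⟩
  · have := h3 w hw hwW
    beta_reduce
    rw [List.length_reverse]
    omega
  · have := h3 w hw (by omega)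
    have := h3 (w + 1) (by omega) hwW
    have := h4 w hw hwW
    beta_reduce
    omega
  · have := h3 w hw hwW
    beta_reduce
    rw [getD_reverse_sub_one (by omega) (by omega)]
    convert h5 w hw hwW using 2
    omega
  · beta_reduce at hlo hhi
    rw [List.length_reverse] at hhi
    have hp : 0 < p ∧ p ≤ rs.length := by
      split_ifs at hlo hhi <;> (try have := h3 w ‹W' ≤ w› hwW) <;>
        (try have := h3 (w + 1) (by omega) ‹w + 1 ≤ W›) <;> omega
    rw [getD_reverse_sub_one hp.1 hp.2]
    convert h6 w hw hwW (rs.length + 1 - p) ?_ ?_ using 3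
    · omega
    all_goals split_ifs at hlo hhi ⊢ <;> (try have := h3 w ‹W' ≤ w› hwW) <;>
        (try have := h3 (w + 1) (by omega) ‹w + 1 ≤ W›) <;> omega

theorem IsLeftCornerWitness.reverse (h : IsLeftCornerWitness rs W W' σ) :
    IsRightCornerWitness rs.reverse W W' (fun w => rs.length + 1 - σ w) := by
  obtain ⟨h1, h2, h3, h4, h5, h6⟩ := h
  refine ⟨h1, h2, fun w hw hwW => ?_, fun w hw hwW => ?_, fun w hw hwW => ?_,
    fun w hw hwW p hlo hhi => ?_⟩
  · have := h3 w hw hwW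
    beta_reduce
    rw [List.length_reverse]
    omega
  · have := h3 w hw (by omega)
    have := h3 (w + 1) (by omega) hwW
    have := h4 w hw hwW
    beta_reduce
    omega
  · have := h3 w hw hwW
    beta_reduce
    rw [getD_reverse_sub_one (by omega) (by omega)]
    convert h5 w hw hwW using 2
    omega
  · beta_reduce at hlo hhi
    rw [List.length_reverse] at hhi
    have hp : 0 < p ∧ p ≤ rs.length := by
      split_ifs at hlo hhi <;> (try have := h3 w ‹W' ≤ w› hwW) <;>
        (try have := h3 (w + 1) (by omega) ‹w + 1 ≤ W›) <;> omega
    rw [getD_reverse_sub_one hp.1 hp.2]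
    convert h6 w hw hwW (rs.length + 1 - p) ?_ ?_ using 3
    · omega
    all_goals split_ifs at hlo hhi ⊢ <;> (try have := h3 w ‹W' ≤ w› hwW) <;>
        (try have := h3 (w + 1) (by omega) ‹w + 1 ≤ W›) <;> omega

theorem exists_isLeftCornerWitness_reverse_iff :
    (∃ W' σ, IsLeftCornerWitness rs.reverse W W' σ) ↔
      ∃ W' σ, IsRightCornerWitness rs W W' σ := by
  constructor
  · rintro ⟨W', σ, h⟩
    rw [← List.reverse_reverse rs]
    exact ⟨W', _, h.reverse⟩
  · rintro ⟨W', σ, h⟩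
    exact ⟨W', _, h.reverse⟩

end Reverse

theorem rankWitness_first_last_iff_cornerWitness_general (T : RTree) (W : ℕ)
    (hne : T.children ≠ []) :
    ((∃ (big : Finset (Fin (T.children.map rank).length)) (X : ℕ)
        (v : Fin (T.children.map rank).length),
        IsRankWitness (T.children.map rank) W big X v ∧ (v : ℕ) = 0) ↔
      (∃ (W' : ℕ) (σ : ℕ → ℕ),
        IsLeftCornerWitness (T.children.map rank) W W' σ)) ∧
    ((∃ (big : Finset (Fin (T.children.map rank).length)) (X : ℕ)
        (v : Fin (T.children.map rank).length),
        IsRankWitness (T.children.map rank) W big X v ∧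
          (v : ℕ) + 1 = (T.children.map rank).length) ↔
      (∃ (W' : ℕ) (σ : ℕ → ℕ),
        IsRightCornerWitness (T.children.map rank) W W' σ)) := by
  have hrs : T.children.map rank ≠ [] := by simpa using hne
  refine ⟨exists_isRankWitness_first_iff_isLeftCornerWitness hrs W, ?_⟩
  rw [← exists_isRankWitness_reverse_iff, ← exists_isLeftCornerWitness_reverse_iff]
  exact exists_isRankWitness_first_iff_isLeftCornerWitness (by simpa using hrs) W

/-- For an ordered rooted tree whose root has `d ≥ 1` children and `W ≥ 2`:
`T` has a rank-`W`-witness with vertical child `c_1` (index `0`) iff `T` has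
a left-corner-`W`-witness; symmetrically, `T` has a rank-`W`-witness with
vertical child `c_d` (index `d-1`) iff `T` has a
right-corner-`W`-witness. -/
theorem rankWitness_first_last_iff_cornerWitness (T : RTree) (W : ℕ)
    (hne : T.children ≠ []) (hW : 2 ≤ W) :
    ((∃ (big : Finset (Fin (T.children.map rank).length)) (X : ℕ)
        (v : Fin (T.children.map rank).length),
        IsRankWitness (T.children.map rank) W big X v ∧ (v : ℕ) = 0) ↔
      (∃ (W' : ℕ) (σ : ℕ → ℕ),
        IsLeftCornerWitness (T.children.map rank) W W' σ)) ∧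
    ((∃ (big : Finset (Fin (T.children.map rank).length)) (X : ℕ)
        (v : Fin (T.children.map rank).length),
        IsRankWitness (T.children.map rank) W big X v ∧
          (v : ℕ) + 1 = (T.children.map rank).length) ↔
      (∃ (W' : ℕ) (σ : ℕ → ℕ),
        IsRightCornerWitness (T.children.map rank) W W' σ)) :=
  rankWitness_first_last_iff_cornerWitness_general T W hne

end RTree
end

section
/- Every ordered rooted tree T with rank R(T) = W has at least 2^{W−1} nodes. Consequently, every ordered rooted tree T with n nodes satisfies R(T) ≤ log₂ n + 1. -/
namespace RTree

/-!
If the children of the root have ranks `r_1, …, r_d` with `∑ 2 ^ (r_i - 1) + 2 ≤ 2 ^ W`, the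
root has a rank-`W`-witness: take `v = d`, `X = W`, and scan the children from left to right,
declaring `c_i` big when `r_i + ℓ_i ≥ W`. Each big child uses up at least half of the remaining
budget `2 ^ (W - ℓ_i)`, so in fact `r_i + ℓ_i ≤ W` for every child, and `π(c_i) = W - ℓ_i`
is a strictly decreasing assignment as required by (R3). By induction
`∑ 2 ^ (R(T_c) - 1) ≤ ∑ size T_c = size T - 1`, so `W = ⌊log₂ (size T)⌋ + 1` qualifies.
-/

open Finset

lemma le_and_two_le_of_two_pow_pred_add_two_le {a b : ℕ} (h : 2 ^ (a - 1) + 2 ≤ 2 ^ b) :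
    a ≤ b ∧ 2 ≤ b := by
  have hb : 2 ≤ b := by
    by_contra! hb
    interval_cases b <;> simp at h
  have hab : a - 1 < b := (Nat.pow_lt_pow_iff_right one_lt_two).mp (by omega)
  omega

section Greedy

variable (r : ℕ → ℕ) (W : ℕ)

def greedyCount : ℕ → ℕ
  | 0 => 0
  | p + 1 => greedyCount p + if W ≤ r p + greedyCount p then 1 else 0

variable {r W}

lemma greedyCount_monotone : Monotone (greedyCount r W) :=
  monotone_nat_of_le_succ fun p => by simp only [greedyCount]; omega

lemma greedyCount_lt_of_lt {i j : ℕ} (hi : W ≤ r i + greedyCount r W i) (hij : i < j) :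
    greedyCount r W i < greedyCount r W j :=
  calc greedyCount r W i < greedyCount r W (i + 1) := by simp [greedyCount, hi]
    _ ≤ greedyCount r W j := greedyCount_monotone hij

lemma card_filter_range_eq_greedyCount (p : ℕ) :
    ((range p).filter fun i => W ≤ r i + greedyCount r W i).card = greedyCount r W p := by
  induction p with
  | zero => rfl
  | succ p ih =>
    rw [range_add_one, filter_insert, greedyCount]
    split_ifs with h
    · rw [card_insert_of_notMem (by simp), ih]
    · rw [ih, add_zero]

lemma two_pow_le_sum_add_two_pow {n : ℕ} (hsum : ∑ j ∈ range n, 2 ^ (r j - 1) + 2 ≤ 2 ^ W)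
    {p : ℕ} (hp : p ≤ n) :
    2 ^ W ≤ ∑ j ∈ range p, 2 ^ (r j - 1) + 2 ^ (W - greedyCount r W p) := by
  induction p with
  | zero => simp [greedyCount]
  | succ p ih =>
    have ih := ih (by omega)
    have hpartial : ∑ j ∈ range (p + 1), 2 ^ (r j - 1) ≤ ∑ j ∈ range n, 2 ^ (r j - 1) :=
      sum_le_sum_of_subset (range_subset_range.mpr hp)
    rw [sum_range_succ] at hpartial ⊢
    obtain ⟨-, hc⟩ := le_and_two_le_of_two_pow_pred_add_two_le
      (a := r p) (b := W - greedyCount r W p) (by omega)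
    rw [greedyCount]
    split_ifs with hbig
    · have hhalf : 2 ^ (W - (greedyCount r W p + 1)) ≤ 2 ^ (r p - 1) :=
        Nat.pow_le_pow_right two_pos (by omega)
      have hdouble : 2 ^ (W - greedyCount r W p) = 2 * 2 ^ (W - (greedyCount r W p + 1)) := by
        rw [← pow_succ']; congr 1; omega
      linarith
    · rw [add_zero]; exact ih.trans (Nat.add_le_add_right (Nat.le_add_right _ _) _)

lemma add_greedyCount_le {n : ℕ} (hsum : ∑ j ∈ range n, 2 ^ (r j - 1) + 2 ≤ 2 ^ W)
    {p : ℕ} (hp : p < n) : r p + greedyCount r W p ≤ W ∧ greedyCount r W p + 2 ≤ W := by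
  have hinv := two_pow_le_sum_add_two_pow hsum hp.le
  have hpartial : ∑ j ∈ range (p + 1), 2 ^ (r j - 1) ≤ ∑ j ∈ range n, 2 ^ (r j - 1) :=
    sum_le_sum_of_subset (range_subset_range.mpr hp)
  rw [sum_range_succ] at hpartial
  have := le_and_two_le_of_two_pow_pred_add_two_le (a := r p) (b := W - greedyCount r W p)
    (by omega)
  omega

end Greedy

theorem hasRankWitness_of_sum_two_pow_add_two_le {rs : List ℕ} {W : ℕ} (hne : rs ≠ [])
    (hsum : (rs.map fun x => 2 ^ (x - 1)).sum + 2 ≤ 2 ^ W) : hasRankWitness rs W := by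
  set r : ℕ → ℕ := fun j => rs.getD j 0
  have hget (i : Fin rs.length) : rs.get i = r i := by simp [r]
  have hsum' : ∑ j ∈ range rs.length, 2 ^ (r j - 1) + 2 ≤ 2 ^ W := by
    rw [← Fin.sum_univ_fun_getElem] at hsum
    rw [← Fin.sum_univ_eq_sum_range]
    simpa [r] using hsum
  have hbound (i : Fin rs.length) := add_greedyCount_le hsum' i.isLt
  set v : Fin rs.length := ⟨rs.length - 1, by simp [List.length_pos_iff.mpr hne]⟩
  have hle_v (i : Fin rs.length) : i ≤ v := Fin.le_def.mpr (by simp [v]; omega)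
  set big := univ.filter fun i : Fin rs.length => W ≤ r i + greedyCount r W i ∨ i = v
  have hleft (i : Fin rs.length) : (big.filter (· < i)).card = greedyCount r W i := by
    rw [← card_filter_range_eq_greedyCount i, ← card_map Fin.valEmbedding]
    congr 1
    ext j
    simp only [big, mem_map, mem_filter, mem_univ, true_and, mem_range, Fin.valEmbedding_apply]
    constructor
    · rintro ⟨j, ⟨hj | rfl, hji⟩, rfl⟩
      · exact ⟨hji, hj⟩
      · exact absurd (hle_v i) (not_le.mpr hji)
    · rintro ⟨hji, hj⟩
      exact ⟨⟨j, by omega⟩, ⟨Or.inl hj, hji⟩, rfl⟩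
  have hright : big.filter (v < ·) = ∅ :=
    filter_eq_empty_iff.mpr fun i _ => not_lt.mpr (hle_v i)
  have hbig_of_lt {i j : Fin rs.length} (hi : i ∈ big) (hij : i < j) :
      W ≤ r i + greedyCount r W i :=
    (mem_filter.mp hi).2.resolve_right fun h => absurd (h ▸ hle_v j) (not_le.mpr hij)
  refine ⟨big, W, v, by have := hbound v; omega, le_rfl, by simp [big], ?_, ?_, ?_, ?_, ?_⟩
  · rw [hleft]; have := hbound v; omega
  · simp [hright]
  · intro i hi _
    simp only [big, mem_filter, mem_univ, true_and, not_or] at hi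
    rw [hget, hleft]; omega
  · exact fun i _ hvi => absurd (hle_v i) (not_le.mpr hvi)
  refine ⟨fun i => W - greedyCount r W i, fun i _ => ?_, fun i hi j hj hij => ?_⟩
  · dsimp only; rw [hget]; have := hbound i; omega
  have hcij : greedyCount r W i = greedyCount r W j := by
    have := hbound i; have := hbound j; simp only at hij; omega
  rcases lt_trichotomy i j with h | h | h
  · exact absurd hcij (greedyCount_lt_of_lt (hbig_of_lt hi h) h).ne
  · exact h
  · exact absurd hcij.symm (greedyCount_lt_of_lt (hbig_of_lt hj h) h).ne

lemma rankAux_le_of_hasRankWitness {rs : List ℕ} {W : ℕ} (hne : rs ≠ []) (hW : 1 ≤ W)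
    (h : hasRankWitness rs W) : rankAux rs ≤ W := by
  rw [rankAux, if_neg hne]
  exact Nat.sInf_le ⟨hW, h⟩

theorem two_pow_pred_rank_le_size : ∀ T : RTree, 2 ^ (rank T - 1) ≤ size T
  | node cs => by
    set n := size (node cs)
    have hn : n = 1 + (cs.attach.map fun c => size c.1).sum := size.eq_1 cs
    suffices hrank : rank (node cs) ≤ Nat.log 2 n + 1 by
      calc 2 ^ (rank (node cs) - 1) ≤ 2 ^ Nat.log 2 n := Nat.pow_le_pow_right two_pos (by omega)
        _ ≤ n := Nat.pow_log_le_self 2 (by omega)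
    rw [rank]
    rcases eq_or_ne cs [] with rfl | hne
    · simp [rankAux]
    have hchildren : ((cs.attach.map fun c => rank c.1).map fun x => 2 ^ (x - 1)).sum ≤
        (cs.attach.map fun c => size c.1).sum := by
      rw [List.map_map]
      exact List.sum_le_sum fun c _ => two_pow_pred_rank_le_size c.1
    have hn_lt := Nat.lt_pow_succ_log_self one_lt_two n
    refine rankAux_le_of_hasRankWitness (by simpa) (by omega) ?_
    exact hasRankWitness_of_sum_two_pow_add_two_le (by simpa) (by omega)
decreasing_by have := List.sizeOf_lt_of_mem c.2; simp only [RTree.node.sizeOf_spec]; omega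

/-- Every ordered rooted tree of rank `W` has at least `2^{W-1}` nodes;
consequently every ordered rooted tree with `n` nodes has rank at most
`log₂ n + 1`. -/
theorem rank_le_log_size :
    (∀ (T : RTree) (W : ℕ), rank T = W → 2 ^ (W - 1) ≤ size T) ∧
    (∀ T : RTree, (rank T : ℝ) ≤ Real.logb 2 ((size T : ℝ)) + 1) := by
  refine ⟨fun T W hW => hW ▸ two_pow_pred_rank_le_size T, fun T => ?_⟩
  have hlog : rank T - 1 ≤ Nat.log 2 (size T) :=
    Nat.le_log_of_pow_le one_lt_two (two_pow_pred_rank_le_size T)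
  calc (rank T : ℝ) ≤ (Nat.log 2 (size T) : ℕ) + 1 := by exact_mod_cast (by omega)
    _ ≤ Real.logb 2 (size T) + 1 := by gcongr; exact_mod_cast Real.natLog_le_logb (size T) 2

end RTree
end

section
/- Define ordered rooted trees T_i by: T_1 is a single node; for i ≥ 2, the root of T_i has five children c_1, …, c_5 in left-to-right order, where each of T_{c_1}, T_{c_2}, T_{c_4}, T_{c_5} is a copy of T_{i−1}, and c_3 has exactly two children, each of which is the root of a copy of T_{i−1}. Then for every i ≥ 1, every node of T_i has degree at most 5, rpw(T_i) ≤ i, and R(T_i) ≥ 2i − 1. -/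
namespace RTree

/-- Every node of the tree has at most `k` children. -/
inductive DegLE (k : ℕ) : RTree → Prop
  | mk (cs : List RTree) : cs.length ≤ k → (∀ c ∈ cs, DegLE k c) →
      DegLE k (RTree.node cs)

/-- The family `T_i` (indexed so that `Tquint i = T_i` for `i ≥ 1`):
`T_1` is a single node; for `i ≥ 2` the root of `T_i` has five children
`c_1, …, c_5` in left-to-right order, where each of
`T_{c_1}, T_{c_2}, T_{c_4}, T_{c_5}` is a copy of `T_{i-1}` and `c_3` has
exactly two children, each of which is the root of a copy of `T_{i-1}`. -/
def Tquint : ℕ → RTree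
  | 0 => node []
  | 1 => node []
  | i + 2 =>
    node [Tquint (i + 1), Tquint (i + 1),
      node [Tquint (i + 1), Tquint (i + 1)],
      Tquint (i + 1), Tquint (i + 1)]

theorem listMaxD_le {l : List ℕ} {B : ℕ} (h : ∀ x ∈ l, x ≤ B) : listMaxD l ≤ B := by
  induction l with
  | nil => simp [listMaxD]
  | cons y ys ih =>
    simp only [List.mem_cons, forall_eq_or_imp] at h
    exact max_le h.1 (ih h.2)

theorem listMinD_le {l : List ℕ} {x : ℕ} (hx : x ∈ l) : listMinD l ≤ x := by
  obtain ⟨y, ys, rfl⟩ := List.exists_cons_of_ne_nil (List.ne_nil_of_mem hx)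
  induction ys with
  | nil => simp_all [listMinD]
  | cons z zs ih =>
    simp only [listMinD, List.foldr_cons, List.mem_cons] at ih hx ⊢
    rcases hx with rfl | rfl | hx
    · exact (min_le_right _ _).trans (ih (.inl rfl))
    · exact min_le_left _ _
    · exact (min_le_right _ _).trans (ih (.inr hx))

theorem rpwAux_le {rs : List ℕ} {j B : ℕ} (hj : j < rs.length)
    (h : ∀ i < rs.length, rs.getD i 0 + (if i = j then 0 else 1) ≤ B) :
    rpwAux rs ≤ B := by
  rw [rpwAux, if_neg (List.ne_nil_of_length_pos (by omega))]
  refine (listMinD_le (List.mem_map_of_mem (List.mem_range.mpr hj))).trans (listMaxD_le ?_)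
  simp only [List.mem_map, List.mem_range]
  rintro _ ⟨i, hi, rfl⟩
  exact h i hi

theorem hasRankWitness_sum_add_length_add_one {rs : List ℕ} (hrs : rs ≠ []) :
    hasRankWitness rs (rs.sum + rs.length + 1) := by
  have hlen : 0 < rs.length := List.length_pos_iff.mpr hrs
  refine ⟨Finset.univ, 1, ⟨0, hlen⟩, le_rfl, by omega, Finset.mem_univ _, ?_, ?_,
    fun i hi => absurd (Finset.mem_univ i) hi, fun i hi => absurd (Finset.mem_univ i) hi,
    fun i => rs.sum + i + 1, fun i _ => ⟨?_, Nat.le_add_left 1 _, by simp only; omega⟩,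
    fun i _ j _ hij => Fin.ext (by simpa using hij)⟩
  · simp [Fin.lt_def]
  · have := (Finset.card_filter_le Finset.univ fun i : Fin rs.length => ⟨0, hlen⟩ < i).trans
      (Finset.card_univ.trans (Fintype.card_fin _)).le
    omega
  · exact (List.le_sum_of_mem (List.get_mem rs i)).trans (by simp only; omega)

theorem le_rankAux {rs : List ℕ} (hrs : rs ≠ []) {k : ℕ}
    (hk : ∀ W big X v, IsRankWitness rs W big X v → k ≤ W) : k ≤ rankAux rs := by
  rw [rankAux, if_neg hrs]
  -- `sInf ∅ = 0`, so the admissible widths must be shown to exist.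
  obtain ⟨-, big, X, v, hw⟩ :=
    Nat.sInf_mem (s := {W | 1 ≤ W ∧ hasRankWitness rs W})
      ⟨_, by omega, hasRankWitness_sum_add_length_add_one hrs⟩
  exact hk _ big X v hw

namespace IsRankWitness

variable {rs : List ℕ} {W X : ℕ} {big : Finset (Fin rs.length)} {v : Fin rs.length}

theorem add_card_le (h : IsRankWitness rs W big X v) {a : ℕ} (hne : big.Nonempty)
    (ha : ∀ i ∈ big, a ≤ rs.get i) : a + big.card ≤ W + 1 := by
  obtain ⟨π, hπ, hinj⟩ := h.2.2.2.2.2.2.2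
  have himg : big.image π ⊆ Finset.Icc a W := fun x hx => by
    obtain ⟨i, hi, rfl⟩ := Finset.mem_image.mp hx
    exact Finset.mem_Icc.mpr ⟨(ha i hi).trans (hπ i hi).1, (hπ i hi).2.2⟩
  have := Finset.card_le_card himg
  rw [Finset.card_image_of_injOn hinj, Nat.card_Icc] at this
  have := hne.card_pos
  omega

theorem get_lt_of_notMem_s15 (h : IsRankWitness rs W big X v) {i : Fin rs.length}
    (hi : i ∉ big) : rs.get i < W := by
  obtain ⟨hX, hXW, hv, -, -, hl, hr, -⟩ := h
  rcases lt_or_gt_of_ne (ne_of_mem_of_not_mem hv hi).symm with hiv | hvi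
  · have := hl i hi hiv; omega
  · have := hr i hi hvi; omega

theorem get_add_get_lt (h : IsRankWitness rs W big X v) {i j : Fin rs.length}
    (hi : i ∉ big) (hj : j ∉ big) (hiv : i < v) (hvj : v < j) :
    rs.get i + rs.get j < W := by
  obtain ⟨-, -, -, -, -, hl, hr, -⟩ := h
  have := hl i hi hiv
  have := hr j hj hvj
  omega

theorem get_add_one_lt_of_big_before (h : IsRankWitness rs W big X v) {i j : Fin rs.length}
    (hj : j ∈ big) (hji : j < i) (hi : i ∉ big) (hiv : i < v) : rs.get i + 1 < W := by
  obtain ⟨-, hXW, -, -, -, hl, -, -⟩ := h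
  have := hl i hi hiv
  have : 0 < (big.filter fun k => k < i).card := Finset.card_pos.mpr ⟨j, by simp [hj, hji]⟩
  omega

theorem get_add_one_lt_of_big_after (h : IsRankWitness rs W big X v) {i j : Fin rs.length}
    (hi : i ∉ big) (hvi : v < i) (hj : j ∈ big) (hij : i < j) : rs.get i + 1 < W := by
  obtain ⟨hX, -, -, -, -, -, hr, -⟩ := h
  have := hr i hi hvi
  have : 0 < (big.filter fun k => i < k).card := Finset.card_pos.mpr ⟨j, by simp [hj, hij]⟩
  omega

end IsRankWitness

theorem add_one_le_rankAux {rs : List ℕ} {a : ℕ} (hlen : 2 ≤ rs.length)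
    (ha : ∀ r ∈ rs, a ≤ r) : a + 1 ≤ rankAux rs := by
  refine le_rankAux (List.ne_nil_of_length_pos (by omega)) fun W big X v h => ?_
  have hge (i : Fin rs.length) : a ≤ rs.get i := ha _ (List.get_mem rs i)
  by_cases hbig : big = Finset.univ
  · have := h.add_card_le ⟨v, h.2.2.1⟩ fun i _ => hge i
    rw [hbig, Finset.card_univ, Fintype.card_fin] at this
    omega
  · obtain ⟨i, -, hi⟩ := Finset.exists_of_ssubset (Finset.ssubset_univ_iff.mpr hbig)
    exact (hge i).trans_lt (h.get_lt_of_notMem_s15 hi)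

set_option synthInstance.maxSize 1000 in
theorem exists_small_between_of_card_le_two (big : Finset (Fin 5)) (v : Fin 5)
    (hv : v ∈ big) (h2 : 2 ∈ big) (hcard : big.card ≤ 2) :
    (∃ i j, i ∉ big ∧ j ∉ big ∧ i < v ∧ v < j) ∨
    (∃ i j, j ∈ big ∧ j < i ∧ i ∉ big ∧ i < v) ∨
    (∃ i j, i ∉ big ∧ v < i ∧ j ∈ big ∧ i < j) := by
  revert big v; decide

theorem add_two_le_rankAux_five {a r₀ r₁ r₂ r₃ r₄ : ℕ} (ha : 1 ≤ a) (h₀ : a ≤ r₀) (h₁ : a ≤ r₁)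
    (h₂ : a + 1 ≤ r₂) (h₃ : a ≤ r₃) (h₄ : a ≤ r₄) : a + 2 ≤ rankAux [r₀, r₁, r₂, r₃, r₄] := by
  refine le_rankAux (List.cons_ne_nil _ _) fun W big X v h => ?_
  by_contra! hW
  have hge (i : Fin 5) : a ≤ [r₀, r₁, r₂, r₃, r₄].get i := by
    fin_cases i <;> simp <;> omega
  have h2 : (2 : Fin 5) ∈ big := by
    by_contra h2
    have := h.get_lt_of_notMem_s15 h2
    simp only [List.get_eq_getElem, Fin.isValue, Fin.val_two, List.getElem_cons_succ,
      List.getElem_cons_zero] at this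
    omega
  have hcard := h.add_card_le ⟨v, h.2.2.1⟩ fun i _ => hge i
  rcases exists_small_between_of_card_le_two big v h.2.2.1 h2 (by omega) with
    ⟨i, j, hi, hj, hiv, hvj⟩ | ⟨i, j, hj, hji, hi, hiv⟩ | ⟨i, j, hi, hvi, hj, hij⟩
  · have := h.get_add_get_lt hi hj hiv hvj
    have := hge i
    have := hge j
    omega
  · have := h.get_add_one_lt_of_big_before hj hji hi hiv
    have := hge i
    omega
  · have := h.get_add_one_lt_of_big_after hi hvi hj hij
    have := hge i
    omega

theorem degLE_Tquint (i : ℕ) : DegLE 5 (Tquint i) := by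
  induction i using Tquint.induct with
  | case1 | case2 => exact .mk [] (by simp) (by simp)
  | case3 i ih =>
    have hpair : DegLE 5 (node [Tquint (i + 1), Tquint (i + 1)]) := .mk _ (by simp) (by simp [ih])
    exact .mk _ (by simp) (by simp [ih, hpair])

theorem rpw_Tquint_succ_le (n : ℕ) : rpw (Tquint (n + 1)) ≤ n + 1 := by
  induction n with
  | zero => simp [Tquint, rpw_node, rpwAux]
  | succ n ih =>
    have hpair : rpw (node [Tquint (n + 1), Tquint (n + 1)]) ≤ n + 2 := by
      rw [rpw_node]
      refine rpwAux_le (j := 0) (by simp) fun i hi => ?_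
      simp only [List.map_cons, List.map_nil, List.length_cons, List.length_nil] at hi
      interval_cases i <;> simp <;> omega
    rw [Tquint, rpw_node]
    refine rpwAux_le (j := 2) (by simp) fun i hi => ?_
    simp only [List.map_cons, List.map_nil, List.length_cons, List.length_nil] at hi
    interval_cases i <;> simp <;> omega

theorem two_mul_add_one_le_rank_Tquint_succ (n : ℕ) : 2 * n + 1 ≤ rank (Tquint (n + 1)) := by
  induction n with
  | zero => simp [Tquint, rank_node, rankAux]
  | succ n ih =>
    have hpair : 2 * n + 2 ≤ rank (node [Tquint (n + 1), Tquint (n + 1)]) := by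
      rw [rank_node]
      exact add_one_le_rankAux (by simp) (by simpa using ih)
    rw [Tquint, rank_node]
    exact add_two_le_rankAux_five (by omega) ih ih hpair ih ih

/-- For every `i ≥ 1`: every node of `T_i` has at most 5 children,
`rpw (T_i) ≤ i`, and `R(T_i) ≥ 2·i - 1`. -/
theorem rpw_le_but_rank_large :
    ∀ i, 1 ≤ i →
      DegLE 5 (Tquint i) ∧ rpw (Tquint i) ≤ i ∧
        2 * i - 1 ≤ rank (Tquint i) := by
  intro i hi
  obtain ⟨n, rfl⟩ := Nat.exists_eq_add_of_le' hi
  exact ⟨degLE_Tquint _, rpw_Tquint_succ_le n, by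
    have := two_mul_add_one_le_rank_Tquint_succ n; omega⟩

end RTree
end

section
/- Let T be an ordered rooted tree whose root has children c_1, …, c_d and let W ≥ 2. If there exist indices i < j < k such that R(T_{c_i}) ≥ W−1, R(T_{c_j}) ≥ W−1 and R(T_{c_k}) ≥ W, then T has no left-corner-W-witness. Symmetrically, if there exist indices i < j < k such that R(T_{c_i}) ≥ W, R(T_{c_j}) ≥ W−1 and R(T_{c_k}) ≥ W−1, then T has no right-corner-W-witness. -/
namespace RTree

lemma left_cover (rs : List ℕ) (W W' : ℕ) (σ : ℕ → ℕ)
    (h : IsLeftCornerWitness rs W W' σ) :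
    ∀ w, W' ≤ w + 1 → w ≤ W → ∀ p, 1 ≤ p →
      p < (if w + 1 ≤ W then σ (w + 1) else rs.length + 1) →
      w ≤ rs.getD (p - 1) 0 → W' ≤ w ∧ p = σ w := by
  obtain ⟨h1, h2, h3, h4, h5, h6⟩ := h
  intro w
  induction w using Nat.strong_induction_on with
  | _ w ih =>
    intro hw1 hw2 p hp1 hp2 hr
    by_cases hWw : W' ≤ w
    · rcases lt_trichotomy p (σ w) with hlt | heq | hgt
      · have hw1' : 1 ≤ w := le_trans h1 hWw
        have hrec := ih (w - 1) (by omega) (by omega) (by omega) p hp1 ?_ (by omega)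
        · obtain ⟨hW', hpe⟩ := hrec
          have hc1 := h5 (w - 1) hW' (by omega)
          rw [← hpe] at hc1
          omega
        · rw [show w - 1 + 1 = w from by omega, if_pos hw2]
          exact hlt
      · exact ⟨hWw, heq⟩
      · have := h6 w hw1 hw2 p (by rw [if_pos hWw]; exact hgt) hp2
        omega
    · have := h6 w hw1 hw2 p (by rw [if_neg hWw]; omega) hp2
      omega

lemma right_cover (rs : List ℕ) (W W' : ℕ) (σ : ℕ → ℕ)
    (h : IsRightCornerWitness rs W W' σ) :
    ∀ w, W' ≤ w + 1 → w ≤ W → ∀ p,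
      (if w + 1 ≤ W then σ (w + 1) else 0) < p → p ≤ rs.length →
      w ≤ rs.getD (p - 1) 0 → W' ≤ w ∧ p = σ w := by
  obtain ⟨h1, h2, h3, h4, h5, h6⟩ := h
  intro w
  induction w using Nat.strong_induction_on with
  | _ w ih =>
    intro hw1 hw2 p hp1 hp2 hr
    by_cases hWw : W' ≤ w
    · rcases lt_trichotomy p (σ w) with hlt | heq | hgt
      · have := h6 w hw1 hw2 p hp1 (by rw [if_pos hWw]; exact hlt)
        omega
      · exact ⟨hWw, heq⟩
      · have hw1' : 1 ≤ w := le_trans h1 hWw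
        have hrec := ih (w - 1) (by omega) (by omega) (by omega) p ?_ hp2 (by omega)
        · obtain ⟨hW', hpe⟩ := hrec
          have hc1 := h5 (w - 1) hW' (by omega)
          rw [← hpe] at hc1
          omega
        · rw [show w - 1 + 1 = w from by omega, if_pos hw2]
          exact hgt
    · have := h6 w hw1 hw2 p hp1 (by rw [if_neg hWw]; omega)
      omega


/-- If the root has children at positions `i < j < k` with ranks at least
`W-1`, `W-1`, `W` respectively, then `T` has no left-corner-`W`-witness;
symmetrically, if it has children at positions `i < j < k` with ranks at
least `W`, `W-1`, `W-1` respectively, then `T` has no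
right-corner-`W`-witness. -/
theorem no_cornerWitness_of_bad_rank_pattern (T : RTree) (W : ℕ)
    (hW : 2 ≤ W) :
    ((∃ i j k : Fin T.children.length, (i : ℕ) < j ∧ (j : ℕ) < k ∧
        W - 1 ≤ rank (T.children.get i) ∧
        W - 1 ≤ rank (T.children.get j) ∧
        W ≤ rank (T.children.get k)) →
      ¬ ∃ (W' : ℕ) (σ : ℕ → ℕ),
          IsLeftCornerWitness (T.children.map rank) W W' σ) ∧
    ((∃ i j k : Fin T.children.length, (i : ℕ) < j ∧ (j : ℕ) < k ∧
        W ≤ rank (T.children.get i) ∧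
        W - 1 ≤ rank (T.children.get j) ∧
        W - 1 ≤ rank (T.children.get k)) →
      ¬ ∃ (W' : ℕ) (σ : ℕ → ℕ),
          IsRightCornerWitness (T.children.map rank) W W' σ) := by
  set rs := T.children.map rank with hrs
  have hlen : rs.length = T.children.length := by simp [hrs]
  have hget : ∀ m : Fin T.children.length, rs.getD (m : ℕ) 0 = rank (T.children.get m) := by
    intro m
    rw [List.getD_eq_getElem _ _ (by omega)]
    simp [hrs]
  constructor
  · rintro ⟨i, j, k, hij, hjk, hri, hrj, hrk⟩ ⟨W', σ, hw⟩
    have hcov := left_cover rs W W' σ hw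
    have hk := hcov W hw.2.1 le_rfl ((k : ℕ) + 1) (by omega)
      (by rw [if_neg (by omega)]; have := k.isLt; omega)
      (by rw [show (k : ℕ) + 1 - 1 = (k : ℕ) from by omega, hget]; exact hrk)
    have hj' := hcov (W - 1) (by omega) (by omega) ((j : ℕ) + 1) (by omega)
      (by rw [show W - 1 + 1 = W from by omega, if_pos le_rfl, ← hk.2]; omega)
      (by rw [show (j : ℕ) + 1 - 1 = (j : ℕ) from by omega, hget]; exact hrj)
    have hi' := hcov (W - 1) (by omega) (by omega) ((i : ℕ) + 1) (by omega)
      (by rw [show W - 1 + 1 = W from by omega, if_pos le_rfl, ← hk.2]; omega)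
      (by rw [show (i : ℕ) + 1 - 1 = (i : ℕ) from by omega, hget]
          exact le_trans (by omega) hri)
    omega
  · rintro ⟨i, j, k, hij, hjk, hri, hrj, hrk⟩ ⟨W', σ, hw⟩
    have hcov := right_cover rs W W' σ hw
    have hi' := hcov W hw.2.1 le_rfl ((i : ℕ) + 1)
      (by rw [if_neg (by omega)]; omega)
      (by have := i.isLt; omega)
      (by rw [show (i : ℕ) + 1 - 1 = (i : ℕ) from by omega, hget]; exact hri)
    have hj' := hcov (W - 1) (by omega) (by omega) ((j : ℕ) + 1)
      (by rw [show W - 1 + 1 = W from by omega, if_pos le_rfl, ← hi'.2]; omega)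
      (by have := j.isLt; omega)
      (by rw [show (j : ℕ) + 1 - 1 = (j : ℕ) from by omega, hget]; exact hrj)
    have hk' := hcov (W - 1) (by omega) (by omega) ((k : ℕ) + 1)
      (by rw [show W - 1 + 1 = W from by omega, if_pos le_rfl, ← hi'.2]; omega)
      (by have := k.isLt; omega)
      (by rw [show (k : ℕ) + 1 - 1 = (k : ℕ) from by omega, hget]; exact hrk)
    omega


end RTree
end
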